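/- arXiv:1608.08463 — 4 statements merged into one kernel-verified Lean document; each statement's English description precedes it below -/
import Mathlib

section
/- Let (X,S) be an association scheme with intersection numbers λ_{ijk} and valencies δ_i. If s_j is a symmetric relation distinct from the identity relation, s_i ≠ s_j, and δ_i > 1, then λ_{iji}·δ_i is even. -/
/-!
Fix `x` and let `N = s_i(x)`, a set of `δ_i` points. Since `s_j` is symmetric and disjoint from
the identity, it makes `N` into a simple graph, and the `s_j`-neighbours of `a ∈ N` inside `N`
are the `z` with `(x, z) ∈ s_i`, `(z, a) ∈ s_j`: there are `λ_{iji}` of them because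
`(x, a) ∈ s_i`. So the graph is `λ_{iji}`-regular on `δ_i` vertices, and by the handshake lemma
`λ_{iji} δ_i` is twice its number of edges.
-/

open Finset

theorem SimpleGraph.IsRegularOfDegree.even_card_mul {V : Type*} [Fintype V] {G : SimpleGraph V}
    [DecidableRel G.Adj] {k : ℕ} (h : G.IsRegularOfDegree k) : Even (Fintype.card V * k) := by
  have hsum := G.sum_degrees_eq_twice_card_edges
  rw [sum_congr rfl fun v _ => h.degree_eq v, sum_const, card_univ, smul_eq_mul] at hsum
  exact hsum ▸ even_two_mul _

theorem even_mul_card_of_forall_card_rel_eq {X : Type*} [Fintype X] {P : X → Prop}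
    [DecidablePred P] {r : X → X → Prop} [DecidableRel r] (hsymm : ∀ a b, r a b → r b a)
    (hirr : ∀ a, ¬ r a a) {k : ℕ} (hk : ∀ a, P a → #{z | P z ∧ r z a} = k) :
    Even (k * #{z | P z}) := by
  let G : SimpleGraph {z // P z} := (SimpleGraph.fromRel r).comap Subtype.val
  have hadj : ∀ a b, G.Adj a b ↔ r b a := fun a b => by
    simp only [G, SimpleGraph.comap_adj, SimpleGraph.fromRel_adj]
    exact ⟨fun h => h.2.elim (hsymm _ _) id,
      fun h => ⟨fun hab => hirr b (hab ▸ h), Or.inr h⟩⟩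
  have : DecidableRel G.Adj := fun a b => decidable_of_iff _ (hadj a b).symm
  have hreg : G.IsRegularOfDegree k := fun a => by
    rw [← hk a a.2, ← G.card_neighborFinset_eq_degree]
    refine card_bij (fun b _ => b.1) (fun b hb => ?_) (fun _ _ _ _ => Subtype.ext)
      (fun z hz => ?_)
    · simpa [hadj, b.2] using hb
    · simp only [mem_filter, mem_univ, true_and] at hz
      exact ⟨⟨z, hz.1⟩, by simpa [hadj] using hz.2, rfl⟩
  simpa [Fintype.card_subtype, mul_comm] using hreg.even_card_mul

section AssociationScheme

variable {X I : Type*} {s : I → X → X → Prop}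

theorem rel_symm_of_star_eq_self {star : I → I} (hconv : ∀ i (x y : X), s (star i) x y ↔ s i y x)
    {j : I} (hsym : star j = j) {a b : X} (h : s j a b) : s j b a := by
  rwa [← hsym, hconv]

theorem rel_irrefl_of_ne_one {one : I} (hpart : ∀ x y : X, ∃! i, s i x y)
    (hid : ∀ x y : X, s one x y ↔ x = y) {j : I} (hj : j ≠ one) (a : X) : ¬ s j a a :=
  fun h => hj ((hpart a a).unique h ((hid a a).2 rfl))

theorem card_rel_eq_val [Fintype X] [∀ i, DecidableRel (s i)] {one : I} {star : I → I}
    (hid : ∀ x y : X, s one x y ↔ x = y) (hconv : ∀ i (x y : X), s (star i) x y ↔ s i y x)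
    {lam : I → I → I → ℕ}
    (hlam : ∀ i j k (x y : X), s k x y → #{z | s i x z ∧ s j z y} = lam i j k)
    {val : I → ℕ} (hval : ∀ i, val i = lam i (star i) one) (i : I) (x : X) :
    #{z | s i x z} = val i := by
  rw [hval, ← hlam i (star i) one x x ((hid x x).2 rfl)]
  congr 1
  ext z
  simp [hconv]

end AssociationScheme

theorem stmt_1_general {X I : Type*} [Fintype X]
    (s : I → X → X → Prop) [∀ i, DecidableRel (s i)]
    (one : I) (star : I → I)
    (hpart : ∀ x y : X, ∃! i : I, s i x y)
    (hid : ∀ x y : X, s one x y ↔ x = y)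
    (hconv : ∀ i (x y : X), s (star i) x y ↔ s i y x)
    (lam : I → I → I → ℕ)
    (hlam : ∀ i j k (x y : X), s k x y →
      ((univ : Finset X).filter (fun z => s i x z ∧ s j z y)).card = lam i j k)
    (val : I → ℕ) (hval : ∀ i, val i = lam i (star i) one)
    (i j : I) (hnonempty : ∃ x y : X, s i x y)
    (hsym : star j = j) (hj : j ≠ one) :
    Even (lam i j i * val i) := by
  obtain ⟨x, -⟩ := hnonempty
  rw [← card_rel_eq_val hid hconv hlam hval i x]
  exact even_mul_card_of_forall_card_rel_eq (r := s j)
    (fun _ _ => rel_symm_of_star_eq_self hconv hsym)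
    (rel_irrefl_of_ne_one hpart hid hj) (hlam i j i x)

/-- In an association scheme (X,S) with identity relation `one`, converse map `star`,
intersection numbers `lam` and valencies `val`: if s_j is symmetric, s_j ≠ 1_X,
s_i ≠ s_j and the valency of s_i is greater than 1, then λ_{iji}·δ_i is even. -/
theorem stmt_1 {X I : Type*} [Fintype X] [DecidableEq X]
    (s : I → X → X → Prop) [∀ i, DecidableRel (s i)]
    (one : I) (star : I → I)
    (hpart : ∀ x y : X, ∃! i : I, s i x y)
    (hid : ∀ x y : X, s one x y ↔ x = y)
    (hconv : ∀ i (x y : X), s (star i) x y ↔ s i y x)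
    (lam : I → I → I → ℕ)
    (hlam : ∀ i j k (x y : X), s k x y →
      ((univ : Finset X).filter (fun z => s i x z ∧ s j z y)).card = lam i j k)
    (val : I → ℕ) (hval : ∀ i, val i = lam i (star i) one)
    (i j : I) (hnonempty : ∃ x y : X, s i x y)
    (hsym : star j = j) (hj : j ≠ one) (hij : i ≠ j) (hvi : 1 < val i) :
    Even (lam i j i * val i) :=
  stmt_1_general s one star hpart hid hconv lam hlam val hval i j hnonempty hsym hj
end

section
/- Let δ_2, δ_3 be positive reals satisfying δ_2² - δ_2 + δ_2δ_3 - 3δ_3 ≥ 0 and δ_3² - δ_3 + δ_2δ_3 - 3δ_2 ≥ 0. Then δ_2 + δ_3 ≥ 4, δ_2 ≥ 2, and δ_3 ≥ 2. -/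
/-- Degree bounds in real bipartite rank 6 table algebras. -/
theorem stmt_9 (δ₂ δ₃ : ℝ) (h2 : 0 < δ₂) (h3 : 0 < δ₃)
    (hA : 0 ≤ δ₂ ^ 2 - δ₂ + δ₂ * δ₃ - 3 * δ₃)
    (hB : 0 ≤ δ₃ ^ 2 - δ₃ + δ₂ * δ₃ - 3 * δ₂) :
    4 ≤ δ₂ + δ₃ ∧ 2 ≤ δ₂ ∧ 2 ≤ δ₃ := by
  have hs : 4 ≤ δ₂ + δ₃ := by nlinarith [sq_nonneg (δ₂ + δ₃)]
  refine ⟨hs, ?_, ?_⟩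
  · nlinarith [sq_nonneg (δ₂ - δ₃), mul_pos h2 h3]
  · nlinarith [sq_nonneg (δ₂ - δ₃), mul_pos h2 h3]
end

section
/- Let s be an odd positive integer with s ≥ 5, and set k_1 = (s+1)²/2 - 1 and k_2 = (s-1)²/2 - 1. Then k_1 and k_2 are odd positive integers, gcd(k_1,k_2) = 1, and (k_1k_2 + 1)/(k_1 + k_2) is an odd integer. -/
/-- For odd s > 3, the numbers k₁ = ((s+1)² - 2)/2 and k₂ = ((s-1)² - 2)/2 are odd
positive coprime integers, k₁ + k₂ divides k₁k₂ + 1, and the quotient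
γ = (k₁k₂+1)/(k₁+k₂) is odd. -/
theorem stmt_11 (s : ℕ) (hs : Odd s) (hs3 : 3 < s)
    (k₁ k₂ : ℕ) (hk₁ : k₁ = ((s + 1) ^ 2 - 2) / 2) (hk₂ : k₂ = ((s - 1) ^ 2 - 2) / 2) :
    Odd k₁ ∧ Odd k₂ ∧ 0 < k₁ ∧ 0 < k₂ ∧ Nat.gcd k₁ k₂ = 1 ∧
      (k₁ + k₂) ∣ (k₁ * k₂ + 1) ∧ Odd ((k₁ * k₂ + 1) / (k₁ + k₂)) := by
  obtain ⟨t, rfl⟩ := hs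
  have ht2 : 2 ≤ t := by omega
  -- u := t^2 - 1
  obtain ⟨u, hu⟩ : ∃ u, u + 1 = t * t := ⟨t * t - 1, by have : 0 < t * t := Nat.mul_pos (by omega) (by omega); omega⟩
  have e1 : k₁ = 2 * u + 4 * t + 3 := by
    have h1 : (2 * t + 1 + 1) ^ 2 = 4 * (t * t) + 8 * t + 4 := by ring
    omega
  have e2 : k₂ = 2 * u + 1 := by
    have h1 : (2 * t + 1 - 1) ^ 2 = 4 * (t * t) := by
      have : 2 * t + 1 - 1 = 2 * t := by omega
      rw [this]; ring
    omega
  subst e1 e2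
  have key : (2 * u + 4 * t + 3) * (2 * u + 1) + 1
      = ((2 * u + 4 * t + 3) + (2 * u + 1)) * (u + t) := by
    have hA : (2 * u + 4 * t + 3) * (2 * u + 1)
        = 4 * (u * u) + 8 * (u * t) + 8 * u + 4 * t + 3 := by ring
    have hB : ((2 * u + 4 * t + 3) + (2 * u + 1)) * (u + t)
        = 4 * (u * u) + 8 * (u * t) + 4 * (t * t) + 4 * u + 4 * t := by ring
    linarith
  have hpos : 0 < (2 * u + 4 * t + 3) + (2 * u + 1) := by omega
  refine ⟨⟨u + 2 * t + 1, by ring⟩, ⟨u, by ring⟩, by omega, by omega, ?_, ⟨u + t, key⟩, ?_⟩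
  · -- gcd = 1
    set d := Nat.gcd (2 * u + 4 * t + 3) (2 * u + 1) with hd
    have h1 : d ∣ 2 * u + 4 * t + 3 := Nat.gcd_dvd_left _ _
    have h2 : d ∣ 2 * u + 1 := Nat.gcd_dvd_right _ _
    have hcomb : (2 * t - 1) * (2 * u + 4 * t + 3) = (2 * t + 3) * (2 * u + 1) + 2 := by
      obtain ⟨v, hv⟩ : ∃ v, t = v + 2 := ⟨t - 2, by omega⟩
      subst hv
      have hA : (2 * (v + 2) - 1) = 2 * v + 3 := by omega
      rw [hA]
      nlinarith [hu]
    have hdvd2 : d ∣ 2 := by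
      have ha : d ∣ (2 * t - 1) * (2 * u + 4 * t + 3) := h1.mul_left _
      have hb : d ∣ (2 * t + 3) * (2 * u + 1) := h2.mul_left _
      have := Nat.dvd_sub ha hb
      rwa [hcomb, Nat.add_sub_cancel_left] at this
    rcases (Nat.dvd_prime Nat.prime_two).mp hdvd2 with h | h
    · exact h
    · exfalso
      rw [h] at h2
      omega
  · rw [key, Nat.mul_comm, Nat.mul_div_cancel _ hpos]
    have heven : Even (t * t + t) := by
      have : t * t + t = t * (t + 1) := by ring
      rw [this]; exact Nat.even_mul_succ_self t
    obtain ⟨m, hm⟩ := heven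
    exact ⟨m - 1, by omega⟩
end

section
/- Suppose positive integers α, γ, k_1, k_2, δ_4 satisfy α(γk_1 + γk_2 + αk_1k_2) - 2δ_4 = 1 and δ_4 divides γk_1k_2. Then 2γ > α². -/
/-- If α(γk₁ + γk₂ + αk₁k₂) = 2δ₄ + 1 and δ₄ divides γk₁k₂, then 2γ > α². -/
theorem stmt_12 (α γ k₁ k₂ δ₄ : ℕ) (hα : 0 < α) (hγ : 0 < γ)
    (hk₁ : 0 < k₁) (hk₂ : 0 < k₂) (hδ₄ : 0 < δ₄)
    (hrel : α * (γ * k₁ + γ * k₂ + α * k₁ * k₂) = 2 * δ₄ + 1)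
    (hdvd : δ₄ ∣ γ * k₁ * k₂) :
    α ^ 2 < 2 * γ := by
  have hle : δ₄ ≤ γ * k₁ * k₂ := Nat.le_of_dvd (by positivity) hdvd
  have h2 : 0 < α * γ * k₁ := by positivity
  have h3 : 0 < α * γ * k₂ := by positivity
  have hk : 0 < k₁ * k₂ := by positivity
  nlinarith [hle, hrel, h2, h3, hk, Nat.mul_le_mul_left (k₁ * k₂) (le_refl (α^2))]
end
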